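/- Let S ⊂ ℝⁿ be a nonempty compact convex set with more than one element, with minimal bounding sphere of radius r > 0 centered at −a ∈ ℝⁿ, and let σ(x) = max{p·x : p ∈ S}. Then for every λ > 0, the upper transform C^u_λ(σ) is differentiable at 0 with ∇C^u_λ(σ)(0) = −a. -/

import Mathlib

open Filter Metric Set
open scoped Topology RealInnerProductSpace

/-- The convex envelope of `g`: pointwise supremum of convex functions below `g`. -/
noncomputable def convEnv {E : Type*} [NormedAddCommGroup E] [NormedSpace ℝ E]
    (g : E → ℝ) (x : E) : ℝ :=
  sSup {y : ℝ | ∃ h : E → ℝ, ConvexOn ℝ Set.univ h ∧ (∀ z, h z ≤ g z) ∧ y = h x}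

/-- Upper compensated convex transform. -/
noncomputable def upperT {E : Type*} [NormedAddCommGroup E] [NormedSpace ℝ E]
    (lam : ℝ) (g : E → ℝ) (x : E) : ℝ :=
  lam * ‖x‖ ^ 2 - convEnv (fun y => lam * ‖y‖ ^ 2 - g y) x

/-- Lower compensated convex transform. -/
noncomputable def lowerT {E : Type*} [NormedAddCommGroup E] [NormedSpace ℝ E]
    (lam : ℝ) (g : E → ℝ) (x : E) : ℝ :=
  convEnv (fun y => g y + lam * ‖y‖ ^ 2) x - lam * ‖x‖ ^ 2

/-- `(c, r)` is a minimal bounding ball of `K`. -/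
def IsMinBall {E : Type*} [NormedAddCommGroup E] (K : Set E) (c : E) (r : ℝ) : Prop :=
  0 ≤ r ∧ K ⊆ Metric.closedBall c r ∧ ∀ c' r', K ⊆ Metric.closedBall c' r' → r ≤ r'


/-!
Write `c = -a` and `σ` for the support function of `S`. Since `S ⊆ closedBall c r`,
`σ x ≤ ⟪c, x⟫ + r ‖x‖`, so the affine function `ℓ = -⟪c, ·⟫ - r² / (4λ)` lies below
`λ‖·‖² - σ`, giving `C^u_λ(σ) x ≥ ⟪c, x⟫ + r² / (4λ)`, with equality at `0`.
Conversely, for a contact point `p ∈ S ∩ sphere c r` one has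
`λ‖y‖² - ⟪p, y⟫ = ℓ y + λ‖y - (p - c) / (2λ)‖²`. A convex function lying below all these
translated paraboloids also lies below the paraboloid centred at any point of the closed
convex hull of their centres, and minimality of the ball puts `c` in the closed convex hull
of the contact points, i.e. `0` in that of the centres. Hence every convex minorant is at most
`ℓ + λ‖·‖²`, and `C^u_λ(σ)` is squeezed between `⟪c, ·⟫ + r² / (4λ)` and that plus `λ‖·‖²`.
-/

section InnerProductSpace

variable {E : Type*} [NormedAddCommGroup E] [InnerProductSpace ℝ E]

theorem ConvexOn.le_comp_sub_of_mem_closure_convexHull {φ ψ : E → ℝ}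
    (hφ : ConvexOn ℝ univ φ) (hψ : Continuous ψ) {U : Set E}
    (hU : ∀ u ∈ U, ∀ y, φ y ≤ ψ (y - u)) {v : E} (hv : v ∈ closure (convexHull ℝ U))
    (y : E) : φ y ≤ ψ (y - v) := by
  set K := {v : E | ∀ y, φ y ≤ ψ (y - v)}
  have hKconvex : Convex ℝ K := by
    intro v₁ hv₁ v₂ hv₂ s t hs ht hst y
    set w := y - (s • v₁ + t • v₂)
    have hy : s • (w + v₁) + t • (w + v₂) = y := by
      rw [smul_add, smul_add, add_add_add_comm, ← add_smul, hst, one_smul]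
      exact sub_add_cancel y _
    calc φ y ≤ s • φ (w + v₁) + t • φ (w + v₂) := hy ▸ hφ.2 trivial trivial hs ht hst
      _ ≤ s • ψ w + t • ψ w := by
        gcongr
        · simpa using hv₁ (w + v₁)
        · simpa using hv₂ (w + v₂)
      _ = ψ w := by rw [← add_smul, hst, one_smul]
  have hKclosed : IsClosed K := by
    simp only [K, ofPred_forall]
    exact isClosed_iInter fun y =>
      isClosed_le continuous_const (hψ.comp (continuous_const.sub continuous_id))
  exact closure_minimal (convexHull_min hU hKconvex) hKclosed hv y

theorem two_mul_inner_le_of_dist_le_dist_add_smul {p c v : E} {r t : ℝ} (ht : 0 < t)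
    (hp : dist p c ≤ r) (hfar : r ≤ dist p (c + t • v)) : 2 * ⟪v, p - c⟫ ≤ t * ‖v‖ ^ 2 := by
  have hexp : dist p (c + t • v) ^ 2 = dist p c ^ 2 - 2 * t * ⟪v, p - c⟫ + t ^ 2 * ‖v‖ ^ 2 := by
    rw [dist_eq_norm, dist_eq_norm, show p - (c + t • v) = (p - c) - t • v by abel,
      norm_sub_sq_real, real_inner_smul_right, norm_smul, real_inner_comm, Real.norm_eq_abs,
      abs_of_pos ht]
    ring
  have hsq : dist p c ^ 2 ≤ dist p (c + t • v) ^ 2 := by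
    gcongr
    exact hp.trans hfar
  refine le_of_mul_le_mul_left ?_ ht
  linarith

theorem mul_norm_sq_sub_inner_eq {lam : ℝ} (hlam : lam ≠ 0) (c p y : E) :
    lam * ‖y‖ ^ 2 - ⟪p, y⟫
      = lam * ‖y - (2 * lam)⁻¹ • (p - c)‖ ^ 2 - ⟪c, y⟫ - ‖p - c‖ ^ 2 / (4 * lam) := by
  rw [norm_sub_sq_real, norm_smul, real_inner_smul_right, inner_sub_right, mul_pow,
    Real.norm_eq_abs, sq_abs, real_inner_comm p y, real_inner_comm c y]
  field_simp
  ring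

theorem hasGradientAt_of_abs_sub_inner_le [CompleteSpace E] {f : E → ℝ} {g x : E} {C : ℝ}
    (h : ∀ y, |f y - f x - ⟪g, y - x⟫| ≤ C * ‖y - x‖ ^ 2) : HasGradientAt f g x := by
  rw [hasGradientAt_iff_isLittleO]
  have hsq : (fun y => ‖y - x‖ ^ 2) =o[𝓝 x] fun y => y - x :=
    (Asymptotics.isLittleO_norm_pow_id one_lt_two).comp_tendsto
      (tendsto_sub_nhds_zero_iff.2 tendsto_id)
  refine Asymptotics.IsBigO.trans_isLittleO (Asymptotics.IsBigO.of_bound C ?_) hsq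
  filter_upwards with y
  simpa [Real.norm_eq_abs] using h y

noncomputable def supportFun (S : Set E) (x : E) : ℝ :=
  sSup {t : ℝ | ∃ p ∈ S, t = ⟪p, x⟫}

theorem inner_le_supportFun {S : Set E} (hSc : IsCompact S) {p : E} (hp : p ∈ S) (x : E) :
    ⟪p, x⟫ ≤ supportFun S x := by
  refine le_csSup ?_ ⟨p, hp, rfl⟩
  have hcont : Continuous fun p : E => ⟪p, x⟫ := continuous_id.inner continuous_const
  obtain ⟨B, hB⟩ := (hSc.image hcont).bddAbove
  exact ⟨B, by rintro t ⟨q, hq, rfl⟩; exact hB ⟨q, hq, rfl⟩⟩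

theorem supportFun_le_inner_add {S : Set E} (hS : S.Nonempty) {c : E} {r : ℝ}
    (hball : S ⊆ closedBall c r) (x : E) : supportFun S x ≤ ⟪c, x⟫ + r * ‖x‖ := by
  obtain ⟨p₀, hp₀⟩ := hS
  refine csSup_le ⟨_, p₀, hp₀, rfl⟩ ?_
  rintro t ⟨p, hp, rfl⟩
  have hpc : ‖p - c‖ ≤ r := mem_closedBall_iff_norm.1 (hball hp)
  calc ⟪p, x⟫ = ⟪c, x⟫ + ⟪p - c, x⟫ := by rw [inner_sub_left]; ring
    _ ≤ ⟪c, x⟫ + ‖p - c‖ * ‖x‖ := by gcongr; exact real_inner_le_norm _ _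
    _ ≤ ⟪c, x⟫ + r * ‖x‖ := by gcongr

end InnerProductSpace

section MinBall

theorem IsMinBall.exists_le_dist {X : Type*} [NormedAddCommGroup X] {S : Set X} {c : X} {r : ℝ}
    (hmin : IsMinBall S c r) (hS : S.Nonempty) (hSc : IsCompact S) (c' : X) :
    ∃ p ∈ S, r ≤ dist p c' := by
  obtain ⟨p, hpS, hp⟩ :=
    hSc.exists_isMaxOn hS (continuous_id.dist (continuous_const (y := c'))).continuousOn
  exact ⟨p, hpS, hmin.2.2 c' _ fun q hq => hp hq⟩

variable {E : Type*} [NormedAddCommGroup E] [InnerProductSpace ℝ E] [CompleteSpace E]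

theorem IsMinBall.center_mem_closure_convexHull {S : Set E} {c : E} {r : ℝ}
    (hmin : IsMinBall S c r) (hS : S.Nonempty) (hSc : IsCompact S) :
    c ∈ closure (convexHull ℝ (S ∩ sphere c r)) := by
  by_contra hc
  obtain ⟨f, u, hfc, hf⟩ :=
    geometric_hahn_banach_point_closed (convex_convexHull ℝ _).closure isClosed_closure hc
  set v := (InnerProductSpace.toDual ℝ E).symm f
  have hpos : ∀ p ∈ S ∩ sphere c r, 0 < ⟪v, p - c⟫ := fun p hp => by
    have := hf p (subset_closure (subset_convexHull ℝ _ hp))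
    simp only [v, InnerProductSpace.toDual_symm_apply, map_sub] at this hfc ⊢
    linarith
  -- The points of `S` farthest from the centres `c + v / (k + 1)` accumulate at a contact point
  -- `q` with `⟪v, q - c⟫ ≤ 0`, contradicting the separation.
  choose p hpS hpfar using fun k : ℕ =>
    hmin.exists_le_dist hS hSc (c + (1 / ((k : ℝ) + 1)) • v)
  obtain ⟨q, hqS, φ, hφ, hpq⟩ := hSc.tendsto_subseq hpS
  have ht : Tendsto (fun k => 1 / ((φ k : ℝ) + 1)) atTop (𝓝 0) :=
    tendsto_one_div_add_atTop_nhds_zero_nat.comp hφ.tendsto_atTop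
  have hq : dist q c = r := by
    have hdist : Tendsto (fun k => dist (p (φ k)) (c + (1 / ((φ k : ℝ) + 1)) • v)) atTop
        (𝓝 (dist q c)) := by
      simpa using hpq.dist (tendsto_const_nhds.add (ht.smul_const v))
    exact le_antisymm (hmin.2.1 hqS)
      (ge_of_tendsto hdist (Eventually.of_forall fun k => hpfar (φ k)))
  have hqv : 2 * ⟪v, q - c⟫ ≤ 0 := by
    have hlhs : Tendsto (fun k => 2 * ⟪v, p (φ k) - c⟫) atTop (𝓝 (2 * ⟪v, q - c⟫)) :=
      ((tendsto_const_nhds.inner (hpq.sub_const c)).const_mul 2)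
    have hrhs : Tendsto (fun k => 1 / ((φ k : ℝ) + 1) * ‖v‖ ^ 2) atTop (𝓝 0) := by
      simpa using ht.mul_const (‖v‖ ^ 2)
    refine le_of_tendsto_of_tendsto hlhs hrhs (Eventually.of_forall fun k => ?_)
    exact two_mul_inner_le_of_dist_le_dist_add_smul (by positivity)
      (hmin.2.1 (hpS (φ k))) (hpfar (φ k))
  linarith [hpos q ⟨hqS, hq⟩]

end MinBall

section ConvexEnvelope

variable {E : Type*} [NormedAddCommGroup E] [NormedSpace ℝ E]

theorem ConvexOn.le_convEnv {g h : E → ℝ} (hh : ConvexOn ℝ univ h) (hle : ∀ z, h z ≤ g z)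
    (x : E) : h x ≤ convEnv g x :=
  le_csSup ⟨g x, by rintro y ⟨h', -, hle', rfl⟩; exact hle' x⟩ ⟨h, hh, hle, rfl⟩

theorem convEnv_le {g : E → ℝ} {x : E} {B : ℝ}
    (hne : ∃ h, ConvexOn ℝ univ h ∧ ∀ z, h z ≤ g z)
    (hB : ∀ h, ConvexOn ℝ univ h → (∀ z, h z ≤ g z) → h x ≤ B) : convEnv g x ≤ B := by
  obtain ⟨h, hh, hle⟩ := hne
  exact csSup_le ⟨_, h, hh, hle, rfl⟩ (by rintro y ⟨h', hh', hle', rfl⟩; exact hB h' hh' hle')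

end ConvexEnvelope

section UpperTransform

variable {E : Type*} [NormedAddCommGroup E] [InnerProductSpace ℝ E]
  {S : Set E} {c : E} {r lam : ℝ}

theorem affine_le_mul_norm_sq_sub_supportFun (hS : S.Nonempty) (hball : S ⊆ closedBall c r)
    (hlam : 0 < lam) (x : E) :
    -⟪c, x⟫ - r ^ 2 / (4 * lam) ≤ lam * ‖x‖ ^ 2 - supportFun S x := by
  have hamgm : r * ‖x‖ ≤ lam * ‖x‖ ^ 2 + r ^ 2 / (4 * lam) := by
    have hsq : 0 ≤ (2 * lam * ‖x‖ - r) ^ 2 / (4 * lam) := by positivity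
    have hexp : lam * ‖x‖ ^ 2 + r ^ 2 / (4 * lam) - r * ‖x‖
        = (2 * lam * ‖x‖ - r) ^ 2 / (4 * lam) := by
      field_simp
      ring
    linarith
  linarith [supportFun_le_inner_add hS hball x]

variable [CompleteSpace E]

theorem ConvexOn.le_of_le_mul_norm_sq_sub_supportFun (hmin : IsMinBall S c r) (hS : S.Nonempty)
    (hSc : IsCompact S) (hlam : 0 < lam) {h : E → ℝ} (hh : ConvexOn ℝ univ h)
    (hle : ∀ z, h z ≤ lam * ‖z‖ ^ 2 - supportFun S z) (x : E) :
    h x ≤ -⟪c, x⟫ - r ^ 2 / (4 * lam) + lam * ‖x‖ ^ 2 := by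
  set f : E →ᵃ[ℝ] E := (2 * lam)⁻¹ • (AffineMap.id ℝ E -ᵥ AffineMap.const ℝ E c)
  have hf : ∀ p, f p = (2 * lam)⁻¹ • (p - c) := fun p => rfl
  have hφ : ConvexOn ℝ univ fun y => h y + ⟪c, y⟫ :=
    hh.add ((innerₛₗ ℝ c).convexOn convex_univ)
  have hψ : Continuous fun d : E => lam * ‖d‖ ^ 2 - r ^ 2 / (4 * lam) := by fun_prop
  have hU : ∀ u ∈ f '' (S ∩ sphere c r), ∀ y,
      h y + ⟪c, y⟫ ≤ lam * ‖y - u‖ ^ 2 - r ^ 2 / (4 * lam) := by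
    rintro _ ⟨p, ⟨hpS, hpr⟩, rfl⟩ y
    rw [mem_sphere_iff_norm] at hpr
    rw [hf]
    have := mul_norm_sq_sub_inner_eq hlam.ne' c p y
    rw [hpr] at this
    linarith [hle y, inner_le_supportFun hSc hpS y]
  have h0 : (0 : E) ∈ closure (convexHull ℝ (f '' (S ∩ sphere c r))) := by
    rw [← f.image_convexHull]
    have hcont : Continuous f := by
      rw [show ⇑f = fun p => (2 * lam)⁻¹ • (p - c) from funext hf]
      fun_prop
    exact image_closure_subset_closure_image hcont
      ⟨c, hmin.center_mem_closure_convexHull hS hSc, by simp [hf]⟩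
  have := hφ.le_comp_sub_of_mem_closure_convexHull hψ hU h0 x
  rw [sub_zero] at this
  linarith

theorem upperT_supportFun_mem_Icc (hmin : IsMinBall S c r) (hS : S.Nonempty) (hSc : IsCompact S)
    (hlam : 0 < lam) (x : E) :
    upperT lam (supportFun S) x
      ∈ Icc (⟪c, x⟫ + r ^ 2 / (4 * lam)) (⟪c, x⟫ + r ^ 2 / (4 * lam) + lam * ‖x‖ ^ 2) := by
  have hminorant : ConvexOn ℝ univ fun y : E => -⟪c, y⟫ - r ^ 2 / (4 * lam) := by
    refine (((-innerₛₗ ℝ c).convexOn convex_univ).add_const (-(r ^ 2 / (4 * lam)))).congr ?_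
    intro y _
    simp [sub_eq_add_neg]
  have hle := affine_le_mul_norm_sq_sub_supportFun hS hmin.2.1 hlam
  have hlower := hminorant.le_convEnv hle x
  have hupper : convEnv (fun y => lam * ‖y‖ ^ 2 - supportFun S y) x
      ≤ -⟪c, x⟫ - r ^ 2 / (4 * lam) + lam * ‖x‖ ^ 2 :=
    convEnv_le ⟨_, hminorant, hle⟩ fun h hh hhle =>
      hh.le_of_le_mul_norm_sq_sub_supportFun hmin hS hSc hlam hhle x
  unfold upperT
  constructor <;> linarith

theorem hasGradientAt_upperT_supportFun (hmin : IsMinBall S c r) (hS : S.Nonempty)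
    (hSc : IsCompact S) (hlam : 0 < lam) : HasGradientAt (upperT lam (supportFun S)) c 0 := by
  refine hasGradientAt_of_abs_sub_inner_le (C := lam) fun y => ?_
  obtain ⟨h0l, h0u⟩ := upperT_supportFun_mem_Icc hmin hS hSc hlam 0
  obtain ⟨hyl, hyu⟩ := upperT_supportFun_mem_Icc hmin hS hSc hlam y
  simp only [inner_zero_right, norm_zero] at h0l h0u
  rw [sub_zero, abs_le]
  constructor <;> linarith

end UpperTransform

theorem stmt_10_general {n : ℕ} (S : Set (EuclideanSpace ℝ (Fin n))) (hS : S.Nonempty)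
    (hSc : IsCompact S)
    (a : EuclideanSpace ℝ (Fin n)) (r : ℝ)
    (hmin : IsMinBall S (-a) r) (lam : ℝ) (hlam : 0 < lam) :
    HasGradientAt (upperT lam (fun x => sSup {t : ℝ | ∃ p ∈ S, t = ⟪p, x⟫})) (-a) 0 :=
  hasGradientAt_upperT_supportFun hmin hS hSc hlam

theorem stmt_10 {n : ℕ} (S : Set (EuclideanSpace ℝ (Fin n))) (hS : S.Nonempty)
    (hSc : IsCompact S) (hScv : Convex ℝ S)
    (hS2 : ∃ p ∈ S, ∃ q ∈ S, p ≠ q)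
    (a : EuclideanSpace ℝ (Fin n)) (r : ℝ) (hr : 0 < r)
    (hmin : IsMinBall S (-a) r) (lam : ℝ) (hlam : 0 < lam) :
    HasGradientAt (upperT lam (fun x => sSup {t : ℝ | ∃ p ∈ S, t = ⟪p, x⟫})) (-a) 0 :=
  stmt_10_general S hS hSc a r hmin lam hlam
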